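/- Cancellation of second-order error terms under the integrability relation: with r¹ := (1/6)u_xxx + (1/6)v_yyy, r² := (1/6)p_xxx − (1/(12 Re))u_xxxx − (1/(12 Re))u_yyyy, r³ := (1/6)p_yyy − (1/(12 Re))v_xxxx − (1/(12 Re))v_yyyy, and r⁴ := (1/3)p_xxxx + (1/3)p_yyyy − (1/6)f¹_xxx − (1/6)f²_yyy, if (u, v, p) is a smooth solution of the Stokes system (u_x + v_y = 0, p_x − (1/Re)Δu = f¹, p_y − (1/Re)Δv = f², p_xx + p_yy = f¹_x + f²_y), then ∂_x r² + ∂_y r³ + (1/Re)(∂_xx r¹ + ∂_yy r¹) − r⁴ = 0. -/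

import Mathlib

noncomputable def pdx (f : ℝ → ℝ → ℝ) : ℝ → ℝ → ℝ := fun x y => deriv (fun t => f t y) x
noncomputable def pdy (f : ℝ → ℝ → ℝ) : ℝ → ℝ → ℝ := fun x y => deriv (fun t => f x t) y
def Smooth2 (f : ℝ → ℝ → ℝ) : Prop := ContDiff ℝ (⊤ : ℕ∞) (Function.uncurry f)

open Function

section Helpers

variable {E : Type*} [NormedAddCommGroup E] [NormedSpace ℝ E]

lemma hasDerivAt_comp_fst {F : ℝ × ℝ → E} (hF : Differentiable ℝ F) (x y : ℝ) :
    HasDerivAt (fun t => F (t, y)) (fderiv ℝ F (x, y) (1, 0)) x :=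
  (hF (x, y)).hasFDerivAt.comp_hasDerivAt x ((hasDerivAt_id x).prodMk (hasDerivAt_const x y))

lemma hasDerivAt_comp_snd {F : ℝ × ℝ → E} (hF : Differentiable ℝ F) (x y : ℝ) :
    HasDerivAt (fun t => F (x, t)) (fderiv ℝ F (x, y) (0, 1)) y :=
  (hF (x, y)).hasFDerivAt.comp_hasDerivAt y ((hasDerivAt_const y x).prodMk (hasDerivAt_id y))

end Helpers

lemma pdx_eq_fderiv {f : ℝ → ℝ → ℝ} (hf : Smooth2 f) (x y : ℝ) :
    pdx f x y = fderiv ℝ (uncurry f) (x, y) (1, 0) :=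
  (hasDerivAt_comp_fst (hf.differentiable (by simp)) x y).deriv

lemma pdy_eq_fderiv {f : ℝ → ℝ → ℝ} (hf : Smooth2 f) (x y : ℝ) :
    pdy f x y = fderiv ℝ (uncurry f) (x, y) (0, 1) :=
  (hasDerivAt_comp_snd (hf.differentiable (by simp)) x y).deriv

lemma Smooth2.pdx {f : ℝ → ℝ → ℝ} (hf : Smooth2 f) : Smooth2 (_root_.pdx f) := by
  have h : uncurry (_root_.pdx f) = fun q : ℝ × ℝ => fderiv ℝ (uncurry f) q (1, 0) := by
    funext q
    exact pdx_eq_fderiv hf q.1 q.2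

  rw [Smooth2, h]
  exact (hf.fderiv_right (by simp)).clm_apply contDiff_const

lemma Smooth2.pdy {f : ℝ → ℝ → ℝ} (hf : Smooth2 f) : Smooth2 (_root_.pdy f) := by
  have h : uncurry (_root_.pdy f) = fun q : ℝ × ℝ => fderiv ℝ (uncurry f) q (0, 1) := by
    funext q
    exact pdy_eq_fderiv hf q.1 q.2
  rw [Smooth2, h]
  exact (hf.fderiv_right (by simp)).clm_apply contDiff_const

lemma Smooth2.hdx {f : ℝ → ℝ → ℝ} (hf : Smooth2 f) (x y : ℝ) :
    HasDerivAt (fun t => f t y) (_root_.pdx f x y) x := by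
  rw [pdx_eq_fderiv hf]
  exact hasDerivAt_comp_fst (hf.differentiable (by simp)) x y

lemma Smooth2.hdy {f : ℝ → ℝ → ℝ} (hf : Smooth2 f) (x y : ℝ) :
    HasDerivAt (fun t => f x t) (_root_.pdy f x y) y := by
  rw [pdy_eq_fderiv hf]
  exact hasDerivAt_comp_snd (hf.differentiable (by simp)) x y

lemma pdx_pdy_comm {f : ℝ → ℝ → ℝ} (hf : Smooth2 f) : pdx (pdy f) = pdy (pdx f) := by
  funext x y
  have hF : ContDiff ℝ (⊤ : ℕ∞) (uncurry f) := hf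
  have hF' : ContDiff ℝ (⊤ : ℕ∞) (fderiv ℝ (uncurry f)) := hF.fderiv_right (by simp)
  have e1 : pdx (pdy f) x y = fderiv ℝ (fderiv ℝ (uncurry f)) (x, y) (1, 0) (0, 1) := by
    have h0 : (fun t => pdy f t y) = fun t => fderiv ℝ (uncurry f) (t, y) (0, 1) := by
      funext t; exact pdy_eq_fderiv hf t y
    have hG := hasDerivAt_comp_fst (hF'.differentiable (by simp)) x y
    have := (hG.clm_apply (hasDerivAt_const x ((0 : ℝ), (1 : ℝ)))).deriv
    show deriv (fun t => pdy f t y) x = _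
    rw [h0, this]; simp
  have e2 : pdy (pdx f) x y = fderiv ℝ (fderiv ℝ (uncurry f)) (x, y) (0, 1) (1, 0) := by
    have h0 : (fun t => pdx f x t) = fun t => fderiv ℝ (uncurry f) (x, t) (1, 0) := by
      funext t; exact pdx_eq_fderiv hf x t
    have hG := hasDerivAt_comp_snd (hF'.differentiable (by simp)) x y
    have := (hG.clm_apply (hasDerivAt_const y ((1 : ℝ), (0 : ℝ)))).deriv
    show deriv (fun t => pdx f x t) y = _
    rw [h0, this]; simp
  rw [e1, e2]
  exact hF.contDiffAt.isSymmSndFDerivAt (by rw [minSmoothness_of_isRCLikeNormedField]; exact WithTop.coe_le_coe.mpr (le_top : (2 : ℕ∞) ≤ ⊤)) (1, 0) (0, 1)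

lemma pdx_add_fun {A B : ℝ → ℝ → ℝ} (hA : Smooth2 A) (hB : Smooth2 B) :
    pdx (fun a b => A a b + B a b) = fun x y => pdx A x y + pdx B x y := by
  funext x y
  exact ((hA.hdx x y).add (hB.hdx x y)).deriv

lemma pdy_add_fun {A B : ℝ → ℝ → ℝ} (hA : Smooth2 A) (hB : Smooth2 B) :
    pdy (fun a b => A a b + B a b) = fun x y => pdy A x y + pdy B x y := by
  funext x y
  exact ((hA.hdy x y).add (hB.hdy x y)).deriv

lemma pdx_comb_s {A B C : ℝ → ℝ → ℝ} (hA : Smooth2 A) (hB : Smooth2 B) (hC : Smooth2 C)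
    (c : ℝ) :
    pdx (fun a b => A a b - c * (B a b + C a b))
      = fun x y => pdx A x y - c * (pdx B x y + pdx C x y) := by
  funext x y
  exact ((hA.hdx x y).sub (((hB.hdx x y).add (hC.hdx x y)).const_mul c)).deriv

lemma pdy_comb_s {A B C : ℝ → ℝ → ℝ} (hA : Smooth2 A) (hB : Smooth2 B) (hC : Smooth2 C)
    (c : ℝ) :
    pdy (fun a b => A a b - c * (B a b + C a b))
      = fun x y => pdy A x y - c * (pdy B x y + pdy C x y) := by
  funext x y
  exact ((hA.hdy x y).sub (((hB.hdy x y).add (hC.hdy x y)).const_mul c)).deriv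

lemma pdx_comb3 {A B C : ℝ → ℝ → ℝ} (hA : Smooth2 A) (hB : Smooth2 B) (hC : Smooth2 C)
    (c1 c2 c3 : ℝ) :
    pdx (fun a b => c1 * A a b - c2 * B a b - c3 * C a b)
      = fun x y => c1 * pdx A x y - c2 * pdx B x y - c3 * pdx C x y := by
  funext x y
  exact ((((hA.hdx x y).const_mul c1).sub ((hB.hdx x y).const_mul c2)).sub
    ((hC.hdx x y).const_mul c3)).deriv

lemma pdy_comb3 {A B C : ℝ → ℝ → ℝ} (hA : Smooth2 A) (hB : Smooth2 B) (hC : Smooth2 C)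
    (c1 c2 c3 : ℝ) :
    pdy (fun a b => c1 * A a b - c2 * B a b - c3 * C a b)
      = fun x y => c1 * pdy A x y - c2 * pdy B x y - c3 * pdy C x y := by
  funext x y
  exact ((((hA.hdy x y).const_mul c1).sub ((hB.hdy x y).const_mul c2)).sub
    ((hC.hdy x y).const_mul c3)).deriv

lemma pdx_comb2 {A B : ℝ → ℝ → ℝ} (hA : Smooth2 A) (hB : Smooth2 B) (c1 c2 : ℝ) :
    pdx (fun a b => c1 * A a b + c2 * B a b)
      = fun x y => c1 * pdx A x y + c2 * pdx B x y := by
  funext x y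
  exact (((hA.hdx x y).const_mul c1).add ((hB.hdx x y).const_mul c2)).deriv

lemma pdy_comb2 {A B : ℝ → ℝ → ℝ} (hA : Smooth2 A) (hB : Smooth2 B) (c1 c2 : ℝ) :
    pdy (fun a b => c1 * A a b + c2 * B a b)
      = fun x y => c1 * pdy A x y + c2 * pdy B x y := by
  funext x y
  exact (((hA.hdy x y).const_mul c1).add ((hB.hdy x y).const_mul c2)).deriv

lemma stokes_x {p u f1 : ℝ → ℝ → ℝ} (hp : Smooth2 p) (hu : Smooth2 u) (c : ℝ)
    (h : ∀ x y, pdx p x y - c * (pdx (pdx u) x y + pdy (pdy u) x y) = f1 x y) :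
    ∀ x y, pdx (pdx p) x y - c * (pdx (pdx (pdx u)) x y + pdy (pdy (pdx u)) x y)
      = pdx f1 x y := by
  have hfe : f1 = fun a b => pdx p a b - c * (pdx (pdx u) a b + pdy (pdy u) a b) :=
    funext fun a => funext fun b => (h a b).symm
  intro x y
  rw [hfe, pdx_comb_s hp.pdx hu.pdx.pdx hu.pdy.pdy c, pdx_pdy_comm hu.pdy, pdx_pdy_comm hu]

lemma stokes_y {p v f2 : ℝ → ℝ → ℝ} (hp : Smooth2 p) (hv : Smooth2 v) (c : ℝ)
    (h : ∀ x y, pdy p x y - c * (pdx (pdx v) x y + pdy (pdy v) x y) = f2 x y) :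
    ∀ x y, pdy (pdy p) x y - c * (pdx (pdx (pdy v)) x y + pdy (pdy (pdy v)) x y)
      = pdy f2 x y := by
  have hfe : f2 = fun a b => pdy p a b - c * (pdx (pdx v) a b + pdy (pdy v) a b) :=
    funext fun a => funext fun b => (h a b).symm
  intro x y
  rw [hfe, pdy_comb_s hp.pdy hv.pdx.pdx hv.pdy.pdy c, ← pdx_pdy_comm hv.pdx, ← pdx_pdy_comm hv]

lemma pd_zero_x : pdx (fun _ _ => (0 : ℝ)) = fun _ _ => 0 := by
  funext x y; simp [pdx]

lemma pd_zero_y : pdy (fun _ _ => (0 : ℝ)) = fun _ _ => 0 := by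
  funext x y; simp [pdy]

lemma div_pdx {u v : ℝ → ℝ → ℝ} (hu : Smooth2 u) (hv : Smooth2 v)
    (h : ∀ x y, pdx u x y + pdy v x y = 0) :
    ∀ x y, pdx (pdx u) x y + pdy (pdx v) x y = 0 := by
  have hfe : (fun a b => pdx u a b + pdy v a b) = fun _ _ => (0 : ℝ) :=
    funext fun a => funext fun b => h a b
  have h2 := congrArg pdx hfe
  rw [pdx_add_fun hu.pdx hv.pdy, pdx_pdy_comm hv, pd_zero_x] at h2
  intro x y
  exact congrFun (congrFun h2 x) y

lemma div_pdy {u v : ℝ → ℝ → ℝ} (hu : Smooth2 u) (hv : Smooth2 v)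
    (h : ∀ x y, pdx u x y + pdy v x y = 0) :
    ∀ x y, pdx (pdy u) x y + pdy (pdy v) x y = 0 := by
  have hfe : (fun a b => pdx u a b + pdy v a b) = fun _ _ => (0 : ℝ) :=
    funext fun a => funext fun b => h a b
  have h2 := congrArg pdy hfe
  rw [pdy_add_fun hu.pdx hv.pdy, ← pdx_pdy_comm hu, pd_zero_y] at h2
  intro x y
  exact congrFun (congrFun h2 x) y

theorem stmt_16 (Re : ℝ) (hRe : Re ≠ 0) (u v p f1 f2 : ℝ → ℝ → ℝ)
    (hu : Smooth2 u) (hv : Smooth2 v) (hp : Smooth2 p)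
    (hf1 : Smooth2 f1) (hf2 : Smooth2 f2)
    (h1 : ∀ x y, pdx u x y + pdy v x y = 0)
    (h2 : ∀ x y, pdx p x y - (1 / Re) * (pdx (pdx u) x y + pdy (pdy u) x y) = f1 x y)
    (h3 : ∀ x y, pdy p x y - (1 / Re) * (pdx (pdx v) x y + pdy (pdy v) x y) = f2 x y)
    (h4 : ∀ x y, pdx (pdx p) x y + pdy (pdy p) x y = pdx f1 x y + pdy f2 x y) :
    ∀ x y,
      pdx (fun a b => (1 / 6) * pdx^[3] p a b - (1 / (12 * Re)) * pdx^[4] u a b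
            - (1 / (12 * Re)) * pdy^[4] u a b) x y
        + pdy (fun a b => (1 / 6) * pdy^[3] p a b - (1 / (12 * Re)) * pdx^[4] v a b
            - (1 / (12 * Re)) * pdy^[4] v a b) x y
        + (1 / Re) * (pdx (pdx (fun a b => (1 / 6) * pdx^[3] u a b + (1 / 6) * pdy^[3] v a b)) x y
            + pdy (pdy (fun a b => (1 / 6) * pdx^[3] u a b + (1 / 6) * pdy^[3] v a b)) x y)
        - ((1 / 3) * pdx^[4] p x y + (1 / 3) * pdy^[4] p x y
            - (1 / 6) * pdx^[3] f1 x y - (1 / 6) * pdy^[3] f2 x y) = 0 := by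
  -- unfold iterates
  have i3x : ∀ g : ℝ → ℝ → ℝ, pdx^[3] g = pdx (pdx (pdx g)) := fun _ => rfl
  have i4x : ∀ g : ℝ → ℝ → ℝ, pdx^[4] g = pdx (pdx (pdx (pdx g))) := fun _ => rfl
  have i3y : ∀ g : ℝ → ℝ → ℝ, pdy^[3] g = pdy (pdy (pdy g)) := fun _ => rfl
  have i4y : ∀ g : ℝ → ℝ → ℝ, pdy^[4] g = pdy (pdy (pdy (pdy g))) := fun _ => rfl
  intro x y
  simp only [i3x, i4x, i3y, i4y]
  -- derived equations
  have ex1 := stokes_x hp hu (1 / Re) h2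
  have ex2 := stokes_x hp.pdx hu.pdx (1 / Re) ex1
  have ex3 := stokes_x hp.pdx.pdx hu.pdx.pdx (1 / Re) ex2
  have ey1 := stokes_y hp hv (1 / Re) h3
  have ey2 := stokes_y hp.pdy hv.pdy (1 / Re) ey1
  have ey3 := stokes_y hp.pdy.pdy hv.pdy.pdy (1 / Re) ey2
  have d1 := div_pdx hu hv h1
  have d2 := div_pdx hu.pdx hv.pdx d1
  have d3 := div_pdx hu.pdx.pdx hv.pdx.pdx d2
  have d4 := div_pdx hu.pdx.pdx.pdx hv.pdx.pdx.pdx d3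
  have g1 := div_pdy hu hv h1
  have g2 := div_pdy hu.pdy hv.pdy g1
  have g3 := div_pdy hu.pdy.pdy hv.pdy.pdy g2
  have g4 := div_pdy hu.pdy.pdy.pdy hv.pdy.pdy.pdy g3
  have E1 := d4 x y
  have E2 := g4 x y
  have EX := ex3 x y
  have EY := ey3 x y
  rw [pdx_comb3 hp.pdx.pdx.pdx hu.pdx.pdx.pdx.pdx hu.pdy.pdy.pdy.pdy,
      pdy_comb3 hp.pdy.pdy.pdy hv.pdx.pdx.pdx.pdx hv.pdy.pdy.pdy.pdy,
      pdx_comb2 hu.pdx.pdx.pdx hv.pdy.pdy.pdy,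
      pdx_comb2 hu.pdx.pdx.pdx.pdx hv.pdy.pdy.pdy.pdx,
      pdy_comb2 hu.pdx.pdx.pdx hv.pdy.pdy.pdy,
      pdy_comb2 hu.pdx.pdx.pdx.pdy hv.pdy.pdy.pdy.pdy]
  linear_combination (-(1 / (12 * Re))) * E1 + (-(1 / (12 * Re))) * E2
    - (1 / 6) * EX - (1 / 6) * EY
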